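/- Assume (H2). Let L ≥ 0, let h : [0,1] → ℝ be Lipschitz with constant L, and let B be a Banach limit. Then for every x ∈ [0,1] and m ≥ 1 the function ω ↦ h(f(x,ω)) is measurable and T^m h is Lipschitz with constant L, and the function B_h(x) = B((T^m h(x))_{m≥1}) is Lipschitz with constant L; moreover if h(0) = a and h(1) = b, then B_h(0) = a and B_h(1) = b. -/
import Mathlib


open MeasureTheory unitInterval

noncomputable section

/-- A bounded real sequence. -/
def IsBddSeq (x : ℕ → ℝ) : Prop := ∃ C : ℝ, ∀ n, |x n| ≤ C

/-- A Banach limit: a linear (on bounded sequences), positive, shift-invariant and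
normalized functional on the space of bounded real sequences. -/
structure BanachLimit where
  toFun : (ℕ → ℝ) → ℝ
  map_add : ∀ x y : ℕ → ℝ, IsBddSeq x → IsBddSeq y →
    toFun (fun n => x n + y n) = toFun x + toFun y
  map_smul : ∀ (c : ℝ) (x : ℕ → ℝ), IsBddSeq x →
    toFun (fun n => c * x n) = c * toFun x
  nonneg : ∀ x : ℕ → ℝ, IsBddSeq x → (∀ n, 0 ≤ x n) → 0 ≤ toFun x
  shift : ∀ x : ℕ → ℝ, IsBddSeq x → toFun (fun n => x (n + 1)) = toFun x
  norm_one : toFun (fun _ => (1 : ℝ)) = 1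

/-- A medial limit with respect to a measure `P`: a Banach limit which commutes with
integration of uniformly bounded sequences of measurable functions. -/
def BanachLimit.IsMedial {Ω : Type*} [MeasurableSpace Ω] (B : BanachLimit)
    (P : Measure Ω) : Prop :=
  ∀ h : ℕ → Ω → ℝ, (∃ C : ℝ, ∀ m ω, |h m ω| ≤ C) → (∀ m, Measurable (h m)) →
    Measurable (fun ω => B.toFun (fun m => h m ω)) ∧
      ∫ ω, B.toFun (fun m => h m ω) ∂P = B.toFun (fun m => ∫ ω, h m ω ∂P)

/-- The operator `T`, `(Th)(x) = ∫_Ω h(f(x,ω)) dP(ω)`. -/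
def Tof {Ω : Type*} [MeasurableSpace Ω] (P : Measure Ω)
    (f : unitInterval → Ω → unitInterval) (h : unitInterval → ℝ) :
    unitInterval → ℝ :=
  fun x => ∫ ω, h (f x ω) ∂P

/-- The supremum norm of a function on `[0,1]`. -/
def supNorm (h : unitInterval → ℝ) : ℝ := ⨆ x, |h x|

/-- Membership in `𝓜([0,1],ℝ)`: `h` is bounded and `ω ↦ h (f x ω)` is measurable
for every `x`. -/
def MemM {Ω : Type*} [MeasurableSpace Ω]
    (f : unitInterval → Ω → unitInterval) (h : unitInterval → ℝ) : Prop :=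
  (∃ C : ℝ, ∀ x, |h x| ≤ C) ∧ ∀ x, Measurable fun ω => h (f x ω)

/-- The function `B_h(x) = B((T^m h(x))_{m ≥ 1})`. -/
def BLof {Ω : Type*} [MeasurableSpace Ω] (P : Measure Ω)
    (f : unitInterval → Ω → unitInterval) (B : BanachLimit)
    (h : unitInterval → ℝ) : unitInterval → ℝ :=
  fun x => B.toFun fun m => (Tof P f)^[m + 1] h x

/-- The function `g_k = Σ_{l=0}^{k-1} T^l g` (meaningful for `k ≥ 1`). -/
def gk {Ω : Type*} [MeasurableSpace Ω] (P : Measure Ω)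
    (f : unitInterval → Ω → unitInterval) (g : unitInterval → ℝ) (k : ℕ) :
    unitInterval → ℝ :=
  fun x => ∑ l ∈ Finset.range k, (Tof P f)^[l] g x

/-- The family `𝒢 = {g_k : k ≥ 1}` is bounded in the supremum norm. -/
def GBdd {Ω : Type*} [MeasurableSpace Ω] (P : Measure Ω)
    (f : unitInterval → Ω → unitInterval) (g : unitInterval → ℝ) : Prop :=
  ∃ C : ℝ, ∀ k : ℕ, 1 ≤ k → ∀ x, |gk P f g k x| ≤ C

/-- The function `B_*(x) = B((g_k(x))_{k ≥ 1})`. -/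
def BStar {Ω : Type*} [MeasurableSpace Ω] (P : Measure Ω)
    (f : unitInterval → Ω → unitInterval) (B : BanachLimit)
    (g : unitInterval → ℝ) : unitInterval → ℝ :=
  fun x => B.toFun fun k => gk P f g (k + 1) x

/-- `φ` satisfies equation (E_g): `ω ↦ φ(f(x,ω))` is measurable for every `x` and
`φ(x) = ∫_Ω φ(f(x,ω)) dP(ω) + g(x)` for every `x`. -/
def SatEq {Ω : Type*} [MeasurableSpace Ω] (P : Measure Ω)
    (f : unitInterval → Ω → unitInterval) (g φ : unitInterval → ℝ) : Prop :=
  (∀ x, Measurable fun ω => φ (f x ω)) ∧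
    ∀ x, φ x = (∫ ω, φ (f x ω) ∂P) + g x

/-- The class `𝓑_a^b` is closed under the Banach limit `B`. -/
def ClosedUnder {Ω : Type*} [MeasurableSpace Ω] (P : Measure Ω)
    (f : unitInterval → Ω → unitInterval) (𝓑 : Submodule ℝ (unitInterval → ℝ))
    (a b : ℝ) (B : BanachLimit) : Prop :=
  ∀ h : unitInterval → ℝ, h ∈ 𝓑 → h 0 = a → h 1 = b →
    BLof P f B h ∈ 𝓑 ∧ BLof P f B h 0 = a ∧ BLof P f B h 1 = b

section Helpers

variable {Ω : Type*} [MeasurableSpace Ω]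

lemma lip_continuous (L : ℝ) (hL : 0 ≤ L) (g : unitInterval → ℝ)
    (hg : ∀ x y : unitInterval, |g x - g y| ≤ L * |(x : ℝ) - (y : ℝ)|) :
    Continuous g := by
  refine (LipschitzWith.of_dist_le_mul (K := L.toNNReal) ?_).continuous
  intro x y
  rw [Real.coe_toNNReal L hL, Subtype.dist_eq, Real.dist_eq, Real.dist_eq]
  exact hg x y

lemma lip_bound (L : ℝ) (hL : 0 ≤ L) (g : unitInterval → ℝ)
    (hg : ∀ x y : unitInterval, |g x - g y| ≤ L * |(x : ℝ) - (y : ℝ)|) :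
    ∀ x, |g x| ≤ |g 0| + L := by
  intro x
  have h1 := hg x 0
  have h2 : |(x : ℝ) - ((0 : unitInterval) : ℝ)| ≤ 1 := by
    have h0 : ((0 : unitInterval) : ℝ) = 0 := rfl
    rw [h0, sub_zero, abs_of_nonneg x.2.1]
    exact x.2.2
  have h3 : L * |(x : ℝ) - ((0 : unitInterval) : ℝ)| ≤ L * 1 :=
    mul_le_mul_of_nonneg_left h2 hL
  calc |g x| = |(g x - g 0) + g 0| := by ring_nf
    _ ≤ |g x - g 0| + |g 0| := abs_add_le _ _
    _ ≤ L * |(x : ℝ) - ((0 : unitInterval) : ℝ)| + |g 0| := by linarith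
    _ ≤ L * 1 + |g 0| := by linarith
    _ = |g 0| + L := by ring

lemma banach_le (B : BanachLimit) (u : ℕ → ℝ) (hu : IsBddSeq u) (c : ℝ)
    (h : ∀ n, u n ≤ c) : B.toFun u ≤ c := by
  obtain ⟨C, hC⟩ := hu
  have hbdd : IsBddSeq (fun n => c + (-1) * u n) := by
    refine ⟨|c| + C, fun n => ?_⟩
    have := hC n
    have := abs_le.1 (hC n)
    have := le_abs_self c
    have := neg_abs_le c
    simp only [neg_one_mul]
    rw [abs_le]; constructor <;> linarith
  have h0 : 0 ≤ B.toFun (fun n => c + (-1) * u n) := by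
    refine B.nonneg _ hbdd fun n => by have := h n; simp only [neg_one_mul]; linarith
  have hadd := B.map_add (fun _ => c) (fun n => (-1) * u n)
    ⟨|c|, fun _ => le_refl _⟩
    ⟨C, fun n => by simp only [neg_one_mul, abs_neg]; exact hC n⟩
  have hc : B.toFun (fun _ => c) = c := by
    have := B.map_smul c (fun _ => (1 : ℝ)) ⟨1, fun n => by simp⟩
    simpa [B.norm_one] using this
  have hneg : B.toFun (fun n => (-1) * u n) = -1 * B.toFun u :=
    B.map_smul (-1) u ⟨C, hC⟩
  rw [hadd, hc, hneg] at h0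
  linarith

lemma banach_abs_sub (B : BanachLimit) (u v : ℕ → ℝ) (hu : IsBddSeq u) (hv : IsBddSeq v)
    (c : ℝ) (h : ∀ n, |u n - v n| ≤ c) : |B.toFun u - B.toFun v| ≤ c := by
  obtain ⟨Cu, hCu⟩ := hu
  obtain ⟨Cv, hCv⟩ := hv
  have hsub : B.toFun (fun n => u n + (-1) * v n) = B.toFun u - B.toFun v := by
    rw [B.map_add u (fun n => (-1) * v n) ⟨Cu, hCu⟩
      ⟨Cv, fun n => by simp only [neg_one_mul, abs_neg]; exact hCv n⟩,
      B.map_smul (-1) v ⟨Cv, hCv⟩]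
    ring
  have hbdd : IsBddSeq (fun n => u n + (-1) * v n) :=
    ⟨Cu + Cv, fun n => by
      simp only [neg_one_mul]
      have h1 := abs_le.1 (hCu n); have h2 := abs_le.1 (hCv n)
      rw [abs_le]; constructor <;> linarith⟩
  have h1 : B.toFun (fun n => u n + (-1) * v n) ≤ c := by
    refine banach_le B _ hbdd c fun n => ?_
    have := abs_le.1 (h n); simp only [neg_one_mul]; linarith
  have h2 : B.toFun (fun n => (-1) * (u n + (-1) * v n)) ≤ c := by
    refine banach_le B _ ⟨Cu + Cv, fun n => by
      simp only [neg_one_mul, abs_neg]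
      have h1 := abs_le.1 (hCu n); have h2 := abs_le.1 (hCv n)
      rw [abs_le]; constructor <;> linarith⟩ c fun n => ?_
    have := abs_le.1 (h n); simp only [neg_one_mul]; linarith
  rw [B.map_smul (-1) _ hbdd] at h2
  rw [hsub] at h1
  rw [hsub] at h2
  rw [abs_le]; constructor <;> linarith

lemma banach_const (B : BanachLimit) (c : ℝ) : B.toFun (fun _ => c) = c := by
  have := B.map_smul c (fun _ => (1 : ℝ)) ⟨1, fun n => by simp⟩
  simpa [B.norm_one] using this

end Helpers

/-- Under (H2), if `h` is Lipschitz with constant `L ≥ 0` and `B` is a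
Banach limit, then `ω ↦ h(f(x,ω))` is measurable for every `x`, every `T^m h`
(`m ≥ 1`) is Lipschitz with constant `L`, and `B_h` is Lipschitz with constant `L`;
moreover if `h(0) = a` and `h(1) = b`, then `B_h(0) = a` and `B_h(1) = b`. -/
theorem stmt_14 {Ω : Type*} [MeasurableSpace Ω] (P : Measure Ω) [IsProbabilityMeasure P]
    (f : unitInterval → Ω → unitInterval)
    (hf0 : ∀ ω, f 0 ω = 0) (hf1 : ∀ ω, f 1 ω = 1)
    (hfmeas : ∀ x, Measurable (f x))
    (hH2 : ∀ x y : unitInterval,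
      ∫ ω, |(f x ω : ℝ) - (f y ω : ℝ)| ∂P ≤ |(x : ℝ) - (y : ℝ)|)
    (L : ℝ) (hL : 0 ≤ L) (h : unitInterval → ℝ)
    (hLip : ∀ x y : unitInterval, |h x - h y| ≤ L * |(x : ℝ) - (y : ℝ)|)
    (B : BanachLimit) (a b : ℝ) :
    (∀ x, Measurable fun ω => h (f x ω)) ∧
    (∀ m : ℕ, 1 ≤ m → ∀ x y : unitInterval,
      |(Tof P f)^[m] h x - (Tof P f)^[m] h y| ≤ L * |(x : ℝ) - (y : ℝ)|) ∧
    (∀ x y : unitInterval,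
      |BLof P f B h x - BLof P f B h y| ≤ L * |(x : ℝ) - (y : ℝ)|) ∧
    (h 0 = a → h 1 = b → BLof P f B h 0 = a ∧ BLof P f B h 1 = b) := by
  have hcontmeas : ∀ (g : unitInterval → ℝ), Continuous g →
      ∀ x, Measurable fun ω => g (f x ω) :=
    fun g hg x => hg.measurable.comp (hfmeas x)
  -- key: Tof preserves the Lipschitz property
  have key : ∀ g : unitInterval → ℝ, (∀ x y, |g x - g y| ≤ L * |(x:ℝ)-(y:ℝ)|) →
      ∀ x y, |Tof P f g x - Tof P f g y| ≤ L * |(x:ℝ)-(y:ℝ)| := by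
    intro g hg x y
    have hcg : Continuous g := lip_continuous L hL g hg
    have hb := lip_bound L hL g hg
    have hint : ∀ z, Integrable (fun ω => g (f z ω)) P := fun z =>
      Integrable.mono' (integrable_const (|g 0| + L))
        (hcontmeas g hcg z).aestronglyMeasurable
        (Filter.Eventually.of_forall fun ω => by
          simpa [Real.norm_eq_abs] using hb (f z ω))
    have hintd : Integrable (fun ω => |(f x ω : ℝ) - (f y ω : ℝ)|) P := by
      have hm : Measurable (fun ω => |(f x ω : ℝ) - (f y ω : ℝ)|) :=
        ((measurable_subtype_coe.comp (hfmeas x)).sub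
          (measurable_subtype_coe.comp (hfmeas y))).abs
      refine Integrable.mono' (integrable_const 1) hm.aestronglyMeasurable
        (Filter.Eventually.of_forall fun ω => ?_)
      rw [Real.norm_eq_abs, abs_abs]
      have h1 := (f x ω).2.1; have h2 := (f x ω).2.2
      have h3 := (f y ω).2.1; have h4 := (f y ω).2.2
      rw [abs_le]; constructor <;> linarith
    calc |Tof P f g x - Tof P f g y|
        = |∫ ω, (g (f x ω) - g (f y ω)) ∂P| := by
          rw [integral_sub (hint x) (hint y)]; rfl
      _ ≤ ∫ ω, |g (f x ω) - g (f y ω)| ∂P := by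
          simpa [Real.norm_eq_abs] using
            norm_integral_le_integral_norm (fun ω => g (f x ω) - g (f y ω)) (μ := P)
      _ ≤ ∫ ω, L * |(f x ω : ℝ) - (f y ω : ℝ)| ∂P := by
          refine integral_mono ((hint x).sub (hint y)).abs (hintd.const_mul L)
            fun ω => hg _ _
      _ = L * ∫ ω, |(f x ω : ℝ) - (f y ω : ℝ)| ∂P := integral_const_mul L _
      _ ≤ L * |(x:ℝ)-(y:ℝ)| := mul_le_mul_of_nonneg_left (hH2 x y) hL
  -- all iterates are Lipschitz
  have iterate_lip : ∀ m : ℕ, ∀ x y : unitInterval,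
      |(Tof P f)^[m] h x - (Tof P f)^[m] h y| ≤ L * |(x:ℝ)-(y:ℝ)| := by
    intro m
    induction m with
    | zero => exact hLip
    | succ n ih =>
      intro x y
      simp only [Function.iterate_succ_apply']
      exact key _ ih x y
  -- values at the endpoints
  have val0 : ∀ g : unitInterval → ℝ, Tof P f g 0 = g 0 := by
    intro g; unfold Tof; simp [hf0]
  have val1 : ∀ g : unitInterval → ℝ, Tof P f g 1 = g 1 := by
    intro g; unfold Tof; simp [hf1]
  have it0 : ∀ m : ℕ, (Tof P f)^[m] h 0 = h 0 := by
    intro m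
    induction m with
    | zero => rfl
    | succ n ih => rw [Function.iterate_succ_apply', val0, ih]
  have it1 : ∀ m : ℕ, (Tof P f)^[m] h 1 = h 1 := by
    intro m
    induction m with
    | zero => rfl
    | succ n ih => rw [Function.iterate_succ_apply', val1, ih]
  -- uniform boundedness of the iterates
  have hbd : ∀ m : ℕ, ∀ x, |(Tof P f)^[m] h x| ≤ |h 0| + L := by
    intro m x
    have := lip_bound L hL ((Tof P f)^[m] h) (iterate_lip m) x
    rwa [it0 m] at this
  refine ⟨fun x => hcontmeas h (lip_continuous L hL h hLip) x, fun m _ => iterate_lip m,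
    ?_, ?_⟩
  · intro x y
    exact banach_abs_sub B _ _ ⟨|h 0| + L, fun m => hbd (m+1) x⟩
      ⟨|h 0| + L, fun m => hbd (m+1) y⟩ _ (fun m => iterate_lip (m+1) x y)
  · intro ha hb
    constructor
    · show B.toFun (fun m => (Tof P f)^[m+1] h 0) = a
      have : (fun m => (Tof P f)^[m+1] h 0) = fun _ => a := by
        funext m; rw [it0 (m+1), ha]
      rw [this, banach_const]
    · show B.toFun (fun m => (Tof P f)^[m+1] h 1) = b
      have : (fun m => (Tof P f)^[m+1] h 1) = fun _ => b := by
        funext m; rw [it1 (m+1), hb]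
      rw [this, banach_const]
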